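/- arXiv:1804.01199 — 2 statements merged into one kernel-verified Lean document; each statement's English description precedes it below -/
import Mathlib

section
/- Let $Q \in M_n(\mathbb{C})$ be a positive invertible matrix, $1 < p < \infty$, and $X \in M_n(\mathbb{C})$ nonzero. Then $\frac{\log(\|XQ^{1/(2p)}\|_{S^{2p}}^{2p}) - \log(\|XQ^{1/2}\|_{HS}^2)}{1-p} \leq \log(\mathrm{tr}(Q)) - \log(\|XQ^{1/2}\|_{HS}^2)$. -/
open Matrix Filter
open scoped ComplexOrder

/-- `Q ^ r` for a Hermitian matrix `Q`, defined via the spectral decomposition. -/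
noncomputable def mpow {n : ℕ} (Q : Matrix (Fin n) (Fin n) ℂ) (hQ : Q.IsHermitian) (r : ℝ) :
    Matrix (Fin n) (Fin n) ℂ :=
  (hQ.eigenvectorUnitary : Matrix (Fin n) (Fin n) ℂ) *
    Matrix.diagonal (fun i => ((hQ.eigenvalues i ^ r : ℝ) : ℂ)) *
    (star hQ.eigenvectorUnitary : Matrix (Fin n) (Fin n) ℂ)

/-- The Schatten `p`-norm `tr(|A|^p)^(1/p)`, via the eigenvalues of `Aᴴ * A`. -/
noncomputable def schatten {n : ℕ} (p : ℝ) (A : Matrix (Fin n) (Fin n) ℂ) : ℝ :=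
  (∑ i, ((Matrix.posSemidef_conjTranspose_mul_self A).1.eigenvalues i) ^ (p / 2)) ^ (1 / p)

/-- The operator norm of a matrix, i.e. its largest singular value. -/
noncomputable def opN {n : ℕ} (A : Matrix (Fin n) (Fin n) ℂ) : ℝ :=
  ⨆ i, Real.sqrt ((Matrix.posSemidef_conjTranspose_mul_self A).1.eigenvalues i)

/-!
Put `A = (X Q^{1/(2p)})ᴴ (X Q^{1/(2p)})` and let `q` be the exponent conjugate to `p`. Then
`‖X Q^{1/2}‖_HS² = tr (Xᴴ X Q) = tr (A Q^{1/q})`, so the trace Hölder inequality gives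
`‖X Q^{1/2}‖_HS^{2p} ≤ ‖X Q^{1/(2p)}‖_{S^{2p}}^{2p} · tr (Q)^{p-1}`; take logarithms and divide by
`1 - p < 0`.

The trace Hölder inequality reduces to scalars: for `A = V diag μ V*` and `B = U diag ν U*` one has
`tr (A B) = (μ ᵥ* C) ⬝ᵥ ν` with `C i j = |(V* U) i j|²` doubly stochastic, and
`(μ ᵥ* C) ⬝ᵥ ν ≤ ‖μ ᵥ* C‖_p ‖ν‖_q ≤ ‖μ‖_p ‖ν‖_q` by Hölder and then Jensen.
-/

section TraceHolder

variable {ι : Type*} [Fintype ι] [DecidableEq ι]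

theorem sum_rpow_vecMul_le_of_mem_doublyStochastic {c : Matrix ι ι ℝ}
    (hc : c ∈ doublyStochastic ℝ ι) {μ : ι → ℝ} (hμ : 0 ≤ μ) {p : ℝ} (hp : 1 ≤ p) :
    ∑ j, (μ ᵥ* c) j ^ p ≤ ∑ i, μ i ^ p :=
  calc ∑ j, (μ ᵥ* c) j ^ p
      ≤ ∑ j, ∑ i, c i j * μ i ^ p := Finset.sum_le_sum fun j _ => by
        simpa only [vecMul, dotProduct, mul_comm (μ _)] using
          Real.rpow_arith_mean_le_arith_mean_rpow Finset.univ (c · j) μ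
            (fun i _ => nonneg_of_mem_doublyStochastic hc) (sum_col_of_mem_doublyStochastic hc j)
            (fun i _ => hμ i) hp
    _ = ∑ i, μ i ^ p := by
        rw [Finset.sum_comm]
        simp only [← Finset.sum_mul, sum_row_of_mem_doublyStochastic hc, one_mul]

theorem dotProduct_vecMul_le_of_mem_doublyStochastic {c : Matrix ι ι ℝ}
    (hc : c ∈ doublyStochastic ℝ ι) {μ ν : ι → ℝ} (hμ : 0 ≤ μ) (hν : 0 ≤ ν) {p q : ℝ}
    (hpq : p.HolderConjugate q) :
    μ ᵥ* c ⬝ᵥ ν ≤ (∑ i, μ i ^ p) ^ (1 / p) * (∑ j, ν j ^ q) ^ (1 / q) := by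
  have hμc : 0 ≤ μ ᵥ* c := fun j =>
    Finset.sum_nonneg fun i _ => mul_nonneg (hμ i) (nonneg_of_mem_doublyStochastic hc)
  calc μ ᵥ* c ⬝ᵥ ν
      ≤ (∑ j, (μ ᵥ* c) j ^ p) ^ (1 / p) * (∑ j, ν j ^ q) ^ (1 / q) :=
        Real.inner_le_Lp_mul_Lq_of_nonneg Finset.univ hpq (fun j _ => hμc j) (fun j _ => hν j)
    _ ≤ (∑ i, μ i ^ p) ^ (1 / p) * (∑ j, ν j ^ q) ^ (1 / q) := by
        refine mul_le_mul_of_nonneg_right (Real.rpow_le_rpow ?_ ?_ hpq.one_div_nonneg)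
          (Real.rpow_nonneg (Finset.sum_nonneg fun j _ => Real.rpow_nonneg (hν j) q) _)
        · exact Finset.sum_nonneg fun j _ => Real.rpow_nonneg (hμc j) p
        · exact sum_rpow_vecMul_le_of_mem_doublyStochastic hc hμ hpq.lt.le

theorem normSq_mem_doublyStochastic {U : Matrix ι ι ℂ} (hU : U ∈ unitaryGroup ι ℂ) :
    Matrix.of (fun i j => Complex.normSq (U i j)) ∈ doublyStochastic ℝ ι := by
  have row : ∀ i, ∑ j, (Complex.normSq (U i j) : ℂ) = 1 := fun i => by
    simpa [Matrix.mul_apply, Complex.mul_conj, Matrix.one_apply] using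
      congrFun₂ (mem_unitaryGroup_iff.mp hU) i i
  have col : ∀ j, ∑ i, (Complex.normSq (U i j) : ℂ) = 1 := fun j => by
    simpa [Matrix.mul_apply, ← Complex.normSq_eq_conj_mul_self, Matrix.one_apply] using
      congrFun₂ (mem_unitaryGroup_iff'.mp hU) j j
  refine mem_doublyStochastic_iff_sum.mpr
    ⟨fun i j => Complex.normSq_nonneg _, fun i => ?_, fun j => ?_⟩
  · exact_mod_cast row i
  · exact_mod_cast col j

theorem re_trace_conj_diagonal_mul_conj_diagonal (V U : Matrix ι ι ℂ) (μ ν : ι → ℝ) :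
    (trace (V * diagonal (fun i => (μ i : ℂ)) * star V *
      (U * diagonal (fun j => (ν j : ℂ)) * star U))).re =
      μ ᵥ* Matrix.of (fun i j => Complex.normSq ((star V * U) i j)) ⬝ᵥ ν := by
  set T := star V * U
  have hcycle : trace (V * diagonal (fun i => (μ i : ℂ)) * star V *
      (U * diagonal (fun j => (ν j : ℂ)) * star U)) =
      trace (diagonal (fun i => (μ i : ℂ)) * (T * diagonal (fun j => (ν j : ℂ)) * star T)) := by
    rw [star_mul, star_star, Matrix.mul_assoc, Matrix.mul_assoc, trace_mul_comm]
    simp only [T, Matrix.mul_assoc]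
  have hdiag : ∀ i, (T * diagonal (fun j => (ν j : ℂ)) * star T) i i =
      ∑ j, ((Complex.normSq (T i j) * ν j : ℝ) : ℂ) := fun i => by
    rw [Matrix.mul_apply]
    refine Finset.sum_congr rfl fun j _ => ?_
    rw [mul_diagonal, star_apply, RCLike.star_def, Complex.ofReal_mul,
      Complex.normSq_eq_conj_mul_self]
    ring
  rw [hcycle, trace]
  simp only [diag_apply, diagonal_mul, hdiag, ← Complex.ofReal_sum, ← Complex.ofReal_mul,
    Complex.ofReal_re, dotProduct, vecMul, of_apply, Finset.mul_sum, Finset.sum_mul]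
  rw [Finset.sum_comm]
  simp only [mul_assoc]

theorem Matrix.PosSemidef.re_trace_mul_conj_diagonal_le {A : Matrix ι ι ℂ} (hA : A.PosSemidef)
    {U : Matrix ι ι ℂ} (hU : U ∈ unitaryGroup ι ℂ) {ν : ι → ℝ} (hν : 0 ≤ ν) {p q : ℝ}
    (hpq : p.HolderConjugate q) :
    (trace (A * (U * diagonal (fun j => (ν j : ℂ)) * star U))).re ≤
      (∑ i, hA.1.eigenvalues i ^ p) ^ (1 / p) * (∑ j, ν j ^ q) ^ (1 / q) := by
  set V : Matrix ι ι ℂ := ↑hA.1.eigenvectorUnitary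
  have hAV : A = V * diagonal (fun i => (hA.1.eigenvalues i : ℂ)) * star V := by
    conv_lhs => rw [hA.1.spectral_theorem]
    rfl
  calc (trace (A * (U * diagonal (fun j => (ν j : ℂ)) * star U))).re
      = hA.1.eigenvalues ᵥ* Matrix.of (fun i j => Complex.normSq ((star V * U) i j)) ⬝ᵥ ν := by
        rw [← re_trace_conj_diagonal_mul_conj_diagonal, ← hAV]
    _ ≤ _ := dotProduct_vecMul_le_of_mem_doublyStochastic
        (normSq_mem_doublyStochastic (mul_mem (star hA.1.eigenvectorUnitary).2 hU))
        hA.eigenvalues_nonneg hν hpq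

end TraceHolder

section mpow

variable {n : ℕ} {Q : Matrix (Fin n) (Fin n) ℂ}

theorem mpow_eq_conjStarAlgAut (hQ : Q.IsHermitian) (r : ℝ) :
    mpow Q hQ r = Unitary.conjStarAlgAut ℂ _ hQ.eigenvectorUnitary
      (diagonal fun i => ((hQ.eigenvalues i ^ r : ℝ) : ℂ)) :=
  rfl

theorem mpow_zero (hQ : Q.IsHermitian) : mpow Q hQ 0 = 1 := by
  simp [mpow_eq_conjStarAlgAut]

theorem mpow_one (hQ : Q.IsHermitian) : mpow Q hQ 1 = Q := by
  conv_rhs => rw [hQ.spectral_theorem]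
  simp only [mpow_eq_conjStarAlgAut, Real.rpow_one]
  rfl

theorem isHermitian_mpow (hQ : Q.IsHermitian) (r : ℝ) : (mpow Q hQ r).IsHermitian := by
  rw [IsHermitian, ← star_eq_conjTranspose, mpow_eq_conjStarAlgAut, ← map_star,
    star_eq_conjTranspose, diagonal_conjTranspose]
  congr
  funext i
  simp

theorem mpow_add (hQ : Q.PosDef) (r s : ℝ) :
    mpow Q hQ.1 (r + s) = mpow Q hQ.1 r * mpow Q hQ.1 s := by
  simp only [mpow_eq_conjStarAlgAut, ← map_mul, diagonal_mul_diagonal, ← Complex.ofReal_mul,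
    Real.rpow_add (hQ.eigenvalues_pos _)]

theorem trace_conjTranspose_mul_mpow_mul_mpow (hQ : Q.PosDef) (X : Matrix (Fin n) (Fin n) ℂ)
    (r s : ℝ) :
    trace ((X * mpow Q hQ.1 r)ᴴ * (X * mpow Q hQ.1 r) * mpow Q hQ.1 s) =
      trace (Xᴴ * X * mpow Q hQ.1 (r + s + r)) := by
  rw [conjTranspose_mul, (isHermitian_mpow hQ.1 r).eq, mpow_add hQ, mpow_add hQ]
  simp only [Matrix.mul_assoc]
  rw [trace_mul_comm]
  simp only [Matrix.mul_assoc]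

theorem trace_conjTranspose_mul_mpow_half (hQ : Q.PosDef) (X : Matrix (Fin n) (Fin n) ℂ) :
    trace ((X * mpow Q hQ.1 (1 / 2))ᴴ * (X * mpow Q hQ.1 (1 / 2))) = trace (Xᴴ * X * Q) := by
  have h := trace_conjTranspose_mul_mpow_mul_mpow hQ X (1 / 2) 0
  rwa [mpow_zero, Matrix.mul_one, show (1 / 2 + 0 + 1 / 2 : ℝ) = 1 by norm_num, mpow_one] at h

theorem re_trace_conjTranspose_mul_mul_pos (hQ : Q.PosDef) {X : Matrix (Fin n) (Fin n) ℂ}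
    (hX : X ≠ 0) : 0 < (trace (Xᴴ * X * Q)).re := by
  have hC : X * mpow Q hQ.1 (1 / 2) ≠ 0 := fun h => hX <| by
    have h' := congrArg (· * mpow Q hQ.1 (-(1 / 2))) h
    rwa [Matrix.mul_assoc, ← mpow_add hQ, add_neg_cancel, mpow_zero, Matrix.mul_one,
      Matrix.zero_mul] at h'
  rw [← trace_conjTranspose_mul_mpow_half hQ]
  exact (Complex.pos_iff.mp <| (posSemidef_conjTranspose_mul_self _).trace_nonneg.lt_of_ne'
    (trace_conjTranspose_mul_self_eq_zero_iff.not.mpr hC)).1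

end mpow

theorem schatten_rpow_self {n : ℕ} {p : ℝ} (hp : 0 < p) (A : Matrix (Fin n) (Fin n) ℂ) :
    schatten p A ^ p =
      ∑ i, (posSemidef_conjTranspose_mul_self A).1.eigenvalues i ^ (p / 2) := by
  rw [schatten, ← Real.rpow_mul (Finset.sum_nonneg fun i _ => Real.rpow_nonneg
    ((posSemidef_conjTranspose_mul_self A).eigenvalues_nonneg i) _), one_div,
    inv_mul_cancel₀ hp.ne', Real.rpow_one]

theorem schatten_two_rpow_two {n : ℕ} (A : Matrix (Fin n) (Fin n) ℂ) :
    schatten 2 A ^ (2 : ℝ) = (trace (Aᴴ * A)).re := by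
  simp [schatten_rpow_self two_pos,
    (posSemidef_conjTranspose_mul_self A).1.trace_eq_sum_eigenvalues]

theorem re_trace_rpow_le_schatten_rpow_mul {n : ℕ} {Q : Matrix (Fin n) (Fin n) ℂ}
    (hQ : Q.PosDef) (X : Matrix (Fin n) (Fin n) ℂ) {p : ℝ} (hp : 1 < p) :
    (trace (Xᴴ * X * Q)).re ^ p ≤
      schatten (2 * p) (X * mpow Q hQ.1 (1 / (2 * p))) ^ (2 * p) * (trace Q).re ^ (p - 1) := by
  set q := p.conjExponent
  have hpq : p.HolderConjugate q := .conjExponent hp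
  set Y := X * mpow Q hQ.1 (1 / (2 * p))
  set lam := hQ.1.eigenvalues
  set a := ∑ i, (posSemidef_conjTranspose_mul_self Y).1.eigenvalues i ^ p
  have ha : schatten (2 * p) Y ^ (2 * p) = a := by
    rw [schatten_rpow_self (by linarith), mul_div_cancel_left₀ p two_ne_zero]
  have hexp : 1 / (2 * p) + 1 / q + 1 / (2 * p) = 1 := by
    have h := hpq.one_div_add_one_div
    rw [div_one] at h
    linarith [show 1 / (2 * p) = 1 / p / 2 by ring]
  have hsplit : trace (Xᴴ * X * Q) = trace (Yᴴ * Y * mpow Q hQ.1 (1 / q)) := by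
    rw [trace_conjTranspose_mul_mpow_mul_mpow hQ, hexp, mpow_one]
  have htrQ : ∑ j, (lam j ^ (1 / q)) ^ q = (trace Q).re := by
    rw [hQ.1.trace_eq_sum_eigenvalues, Complex.re_sum]
    refine Finset.sum_congr rfl fun j _ => ?_
    rw [← Real.rpow_mul (hQ.eigenvalues_pos j).le, one_div_mul_cancel hpq.symm.ne_zero,
      Real.rpow_one]
    rfl
  have hholder : (trace (Xᴴ * X * Q)).re ≤ a ^ (1 / p) * (trace Q).re ^ (1 / q) := by
    rw [hsplit, ← htrQ]
    exact (posSemidef_conjTranspose_mul_self Y).re_trace_mul_conj_diagonal_le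
      hQ.1.eigenvectorUnitary.2 (fun j => Real.rpow_nonneg (hQ.eigenvalues_pos j).le _) hpq
  have ha0 : 0 ≤ a := Finset.sum_nonneg fun i _ =>
    Real.rpow_nonneg ((posSemidef_conjTranspose_mul_self Y).eigenvalues_nonneg i) p
  have htr0 : 0 ≤ (trace Q).re := (Complex.nonneg_iff.mp hQ.posSemidef.trace_nonneg).1
  have hS0 : 0 ≤ (trace (Xᴴ * X * Q)).re := by
    rw [← trace_conjTranspose_mul_mpow_half hQ]
    exact (Complex.nonneg_iff.mp (posSemidef_conjTranspose_mul_self _).trace_nonneg).1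
  calc (trace (Xᴴ * X * Q)).re ^ p
      ≤ (a ^ (1 / p) * (trace Q).re ^ (1 / q)) ^ p := Real.rpow_le_rpow hS0 hholder hpq.nonneg
    _ = a * (trace Q).re ^ (p - 1) := by
        rw [Real.mul_rpow (by positivity) (by positivity), ← Real.rpow_mul ha0,
          ← Real.rpow_mul htr0, one_div_mul_cancel hpq.ne_zero, Real.rpow_one, one_div_mul_eq_div,
          hpq.div_conj_eq_sub_one]
    _ = _ := by rw [ha]

theorem log_sub_log_div_one_sub_le {a b t p : ℝ} (ha : 0 < a) (ht : 0 < t) (hp : 1 < p)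
    (h : a ^ p ≤ b * t ^ (p - 1)) :
    (Real.log b - Real.log a) / (1 - p) ≤ Real.log t - Real.log a := by
  have hb : 0 < b := pos_of_mul_pos_left ((Real.rpow_pos_of_pos ha p).trans_le h)
    (Real.rpow_nonneg ht.le _)
  have hlog : p * Real.log a ≤ Real.log b + (p - 1) * Real.log t := by
    rw [← Real.log_rpow ha, ← Real.log_rpow ht, ← Real.log_mul hb.ne' (by positivity)]
    exact Real.log_le_log (by positivity) h
  rw [div_le_iff_of_neg (by linarith)]
  nlinarith

theorem log_schatten_ratio_le {n : ℕ} (Q X : Matrix (Fin n) (Fin n) ℂ) (hQ : Q.PosDef)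
    (hX : X ≠ 0) (p : ℝ) (hp1 : 1 < p) :
    (Real.log (schatten (2 * p) (X * mpow Q hQ.1 (1 / (2 * p))) ^ (2 * p)) -
        Real.log (schatten 2 (X * mpow Q hQ.1 (1 / 2)) ^ (2 : ℝ))) / (1 - p) ≤
      Real.log ((Matrix.trace Q).re) -
        Real.log (schatten 2 (X * mpow Q hQ.1 (1 / 2)) ^ (2 : ℝ)) := by
  have : Nonempty (Fin n) := by
    by_contra h
    exact hX (Matrix.ext fun i => (h ⟨i⟩).elim)
  rw [schatten_two_rpow_two, trace_conjTranspose_mul_mpow_half hQ]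
  exact log_sub_log_div_one_sub_le (re_trace_conjTranspose_mul_mul_pos hQ hX)
    (Complex.pos_iff.mp hQ.trace_pos).1 hp1 (re_trace_rpow_le_schatten_rpow_mul hQ X hp1)
end

section
/- Let $0 < q < 1$ and for $n \in \mathbb{N}$ set $d_n = \frac{q^{-n}(1-q^{2n+2})}{1-q^2}$ and let $x_n = \left(\frac{1}{d_n q^{-n+2j}}\right)_{j=0}^n$, which is a probability distribution on $\{0,1,\dots,n\}$. Then the Shannon entropy $H(x_n) = \sum_{j=0}^n \frac{1}{d_n q^{-n+2j}}\log(d_n q^{-n+2j})$ satisfies $\lim_{n\to\infty} H(x_n) = \log\left(\frac{1}{1-q^2}\right) + \frac{2q^2\log(q^{-1})}{1-q^2}$. In particular, $\sup_n H(x_n) < \infty$. -/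
/-- The quantum dimension `d_n = q^{-n}(1-q^{2n+2})/(1-q^2)` of the `(n+1)`-dimensional
irreducible representation of `SU_q(2)`. -/
noncomputable def dq (q : ℝ) (n : ℕ) : ℝ := (1 - q ^ (2 * n + 2)) / (1 - q ^ 2) / q ^ n

/-- The Shannon entropy of the probability distribution `x_n = (1/(d_n q^{-n+2j}))_{j=0}^n`. -/
noncomputable def Hq (q : ℝ) (n : ℕ) : ℝ :=
  ∑ j ∈ Finset.range (n + 1),
    (dq q n * (q ^ (2 * j) / q ^ n))⁻¹ * Real.log (dq q n * (q ^ (2 * j) / q ^ n))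


/-!
Reversing the index `j ↦ n - j` turns `x_n` into the truncated geometric distribution
`r ^ j / S_n` with `r = q ^ 2` and `S_n = ∑_{k ≤ n} r ^ k = q ^ n d_n`. Its entropy is
`log S_n - log r · (∑_{k ≤ n} k r ^ k) / S_n`, and both partial sums converge, to `(1 - r)⁻¹`
and `r / (1 - r) ^ 2`.
-/

open Finset Filter Topology Real

lemma dq_eq_geom_sum_div {q : ℝ} (hq : q ^ 2 ≠ 1) (n : ℕ) :
    dq q n = (∑ k ∈ range (n + 1), (q ^ 2) ^ k) / q ^ n := by
  rw [dq, geom_sum_eq hq, ← pow_mul, ← neg_div_neg_eq (_ - 1), neg_sub, neg_sub, mul_add,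
    mul_one]

lemma dq_mul_reflected_weight {q : ℝ} (hq0 : q ≠ 0) (hq1 : q ^ 2 ≠ 1) {n j : ℕ} (hj : j ≤ n) :
    dq q n * (q ^ (2 * (n - j)) / q ^ n) = (∑ k ∈ range (n + 1), (q ^ 2) ^ k) / (q ^ 2) ^ j := by
  have hpow : q ^ (2 * (n - j)) * (q ^ 2) ^ j = q ^ n * q ^ n := by
    rw [← pow_mul, ← pow_add, ← pow_add]
    congr 1
    omega
  rw [dq_eq_geom_sum_div hq1, div_mul_div_comm, div_eq_div_iff (by positivity) (by positivity)]
  linear_combination (∑ k ∈ range (n + 1), (q ^ 2) ^ k) * hpow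

lemma sum_dq_weight_eq_sum_geom {q : ℝ} (hq0 : q ≠ 0) (hq1 : q ^ 2 ≠ 1) (f : ℝ → ℝ) (n : ℕ) :
    ∑ j ∈ range (n + 1), f (dq q n * (q ^ (2 * j) / q ^ n)) =
      ∑ j ∈ range (n + 1), f ((∑ k ∈ range (n + 1), (q ^ 2) ^ k) / (q ^ 2) ^ j) := by
  rw [← sum_range_reflect]
  refine sum_congr rfl fun j hj => ?_
  rw [add_tsub_cancel_right, dq_mul_reflected_weight hq0 hq1 (mem_range_succ_iff.mp hj)]

section TruncatedGeometric

variable {r : ℝ}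

lemma sum_inv_geom_sum_div_pow (hr : 0 ≤ r) (n : ℕ) :
    ∑ j ∈ range (n + 1), ((∑ k ∈ range (n + 1), r ^ k) / r ^ j)⁻¹ = 1 := by
  simp_rw [inv_div]
  rw [← sum_div, div_self (geom_sum_pos hr n.succ_ne_zero).ne']

lemma entropy_geom_sum_div_pow (hr : 0 < r) (n : ℕ) :
    ∑ j ∈ range (n + 1), ((∑ k ∈ range (n + 1), r ^ k) / r ^ j)⁻¹ *
        log ((∑ k ∈ range (n + 1), r ^ k) / r ^ j) =
      log (∑ k ∈ range (n + 1), r ^ k) -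
        log r * ((∑ k ∈ range (n + 1), (k : ℝ) * r ^ k) / ∑ k ∈ range (n + 1), r ^ k) := by
  set S := ∑ k ∈ range (n + 1), r ^ k
  have hS : S ≠ 0 := (geom_sum_pos hr.le n.succ_ne_zero).ne'
  have hterm : ∀ j ∈ range (n + 1), (S / r ^ j)⁻¹ * log (S / r ^ j) =
      log S * (r ^ j / S) - log r * ((j : ℝ) * r ^ j / S) := fun j _ => by
    rw [log_div hS (pow_ne_zero j hr.ne'), log_pow, inv_div]
    ring
  rw [sum_congr rfl hterm, sum_sub_distrib, ← mul_sum, ← mul_sum, ← sum_div, ← sum_div,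
    div_self hS, mul_one]

lemma tendsto_entropy_geom_sum (hr0 : 0 < r) (hr1 : r < 1) :
    Tendsto (fun n : ℕ => log (∑ k ∈ range (n + 1), r ^ k) -
        log r * ((∑ k ∈ range (n + 1), (k : ℝ) * r ^ k) / ∑ k ∈ range (n + 1), r ^ k))
      atTop (𝓝 (log (1 - r)⁻¹ - log r * (r / (1 - r)))) := by
  have h1r : 0 < 1 - r := sub_pos.mpr hr1
  have hS : Tendsto (fun n : ℕ => ∑ k ∈ range (n + 1), r ^ k) atTop (𝓝 (1 - r)⁻¹) :=
    (hasSum_geometric_of_lt_one hr0.le hr1).tendsto_sum_nat.comp (tendsto_add_atTop_nat 1)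
  have hT : Tendsto (fun n : ℕ => ∑ k ∈ range (n + 1), (k : ℝ) * r ^ k) atTop
      (𝓝 (r / (1 - r) ^ 2)) := by
    have hnorm : ‖r‖ < 1 := by rwa [norm_of_nonneg hr0.le]
    exact (hasSum_coe_mul_geometric_of_norm_lt_one hnorm).tendsto_sum_nat.comp
      (tendsto_add_atTop_nat 1)
  have hlimit : r / (1 - r) ^ 2 / (1 - r)⁻¹ = r / (1 - r) := by
    field_simp
  rw [← hlimit]
  exact ((continuousAt_log (by positivity)).tendsto.comp hS).sub
    ((hT.div hS (by positivity)).const_mul _)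

end TruncatedGeometric

theorem entropy_xn_tendsto (q : ℝ) (hq0 : 0 < q) (hq1 : q < 1) :
    (∀ n : ℕ, ∑ j ∈ Finset.range (n + 1), (dq q n * (q ^ (2 * j) / q ^ n))⁻¹ = 1) ∧
      Filter.Tendsto (fun n : ℕ => Hq q n) Filter.atTop
        (nhds (Real.log (1 / (1 - q ^ 2)) + 2 * q ^ 2 * Real.log q⁻¹ / (1 - q ^ 2))) ∧
      BddAbove (Set.range fun n : ℕ => Hq q n) := by
  have hr0 : 0 < q ^ 2 := by positivity
  have hr1 : q ^ 2 < 1 := by nlinarith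
  have hlim : Tendsto (fun n => Hq q n) atTop
      (𝓝 (log (1 - q ^ 2)⁻¹ - log (q ^ 2) * (q ^ 2 / (1 - q ^ 2)))) :=
    (tendsto_entropy_geom_sum hr0 hr1).congr fun n => by
    rw [Hq, sum_dq_weight_eq_sum_geom hq0.ne' hr1.ne (fun x => x⁻¹ * log x),
      entropy_geom_sum_div_pow hr0]
  have hvalue : log (1 - q ^ 2)⁻¹ - log (q ^ 2) * (q ^ 2 / (1 - q ^ 2)) =
      log (1 / (1 - q ^ 2)) + 2 * q ^ 2 * log q⁻¹ / (1 - q ^ 2) := by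
    rw [one_div, log_pow, log_inv q]
    push_cast
    ring
  rw [hvalue] at hlim
  refine ⟨fun n => ?_, hlim, hlim.bddAbove_range⟩
  rw [sum_dq_weight_eq_sum_geom hq0.ne' hr1.ne (·⁻¹), sum_inv_geom_sum_div_pow hr0.le]
end
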